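/- arXiv:math/0007173 — 2 statements merged into one kernel-verified Lean document; each statement's English description precedes it below -/
import Mathlib

section
/- With the notation of the flow completion construction, for each s ∈ ℝ the image j_s(M) is open in M_ℝ (with the quotient topology), and j_s : M → j_s(M) is a homeomorphism onto its image. -/
open scoped Manifold Topology
open Set Filter Topology

/-- A maximal local flow of a vector field `v` on a manifold `M`. -/
structure MaxLocalFlow {E : Type*} [NormedAddCommGroup E] [NormedSpace ℝ E]
    {H : Type*} [TopologicalSpace H] (I : ModelWithCorners ℝ E H)
    (M : Type*) [TopologicalSpace M] [ChartedSpace H M]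
    (v : (x : M) → TangentSpace I x) where
  domain : Set (ℝ × M)
  toFun : ℝ → M → M
  isOpen_domain : IsOpen domain
  zero_mem : ∀ x : M, ((0 : ℝ), x) ∈ domain
  map_zero : ∀ x : M, toFun 0 x = x
  continuousOn : ContinuousOn (fun p : ℝ × M => toFun p.1 p.2) domain
  segment_mem : ∀ (x : M) (t : ℝ), (t, x) ∈ domain → ∀ u ∈ Set.uIcc 0 t, (u, x) ∈ domain
  isIntegralCurveOn : ∀ x : M,
    ∀ t ∈ {t | (t, x) ∈ domain}, HasMFDerivAt 𝓘(ℝ, ℝ) I (fun t => toFun t x) t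
      ((1 : ℝ →L[ℝ] ℝ).smulRight <| v ((fun t => toFun t x) t))
  map_add : ∀ (x : M) (s t : ℝ), (s, x) ∈ domain → (t, toFun s x) ∈ domain →
    (s + t, x) ∈ domain ∧ toFun (s + t) x = toFun t (toFun s x)
  map_neg : ∀ (x : M) (t : ℝ), (t, x) ∈ domain →
    (-t, toFun t x) ∈ domain ∧ toFun (-t) (toFun t x) = x
  maximal : ∀ (x : M) (γ : ℝ → M) (a b : ℝ), a < 0 → 0 < b → γ 0 = x →
    (∀ t ∈ Set.Ioo a b, HasMFDerivAt 𝓘(ℝ, ℝ) I γ t ((1 : ℝ →L[ℝ] ℝ).smulRight <| v (γ t))) →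
    ∀ t ∈ Set.Ioo a b, (t, x) ∈ domain ∧ toFun t x = γ t

/-- The vector field `X̄ = ∂ₛ × X` on `ℝ × M`. -/
def barField {E : Type*} [NormedAddCommGroup E] [NormedSpace ℝ E]
    {H : Type*} [TopologicalSpace H] {I : ModelWithCorners ℝ E H}
    {M : Type*} [TopologicalSpace M] [ChartedSpace H M]
    (v : (x : M) → TangentSpace I x) :
    (p : ℝ × M) → TangentSpace ((𝓘(ℝ, ℝ)).prod I) p :=
  fun p => ((1 : ℝ), v p.2)

/-- The orbit relation of a (local) flow: `p ~ q` iff the flow carries `p` to `q`. -/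
def MaxLocalFlow.rel {E : Type*} [NormedAddCommGroup E] [NormedSpace ℝ E]
    {H : Type*} [TopologicalSpace H] {I : ModelWithCorners ℝ E H}
    {M : Type*} [TopologicalSpace M] [ChartedSpace H M]
    {v : (x : M) → TangentSpace I x} (Φ : MaxLocalFlow I M v) : M → M → Prop :=
  fun p q => ∃ t : ℝ, (t, p) ∈ Φ.domain ∧ Φ.toFun t p = q


section Aux

variable {E : Type*} [NormedAddCommGroup E] [NormedSpace ℝ E]
    {H : Type*} [TopologicalSpace H] {I : ModelWithCorners ℝ E H}
    {M : Type*} [TopologicalSpace M] [ChartedSpace H M]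
    {v : (x : M) → TangentSpace I x}
    (Φ : MaxLocalFlow ((𝓘(ℝ, ℝ)).prod I) (ℝ × M) (barField v))

/-- The first coordinate of the flow of `barField v` is translation. -/
lemma MaxLocalFlow.fst_toFun (p : ℝ × M) (t : ℝ) (ht : (t, p) ∈ Φ.domain) :
    (Φ.toFun t p).1 = p.1 + t := by
  have hic := Φ.isIntegralCurveOn p
  have hseg := Φ.segment_mem p t ht
  set f : ℝ → ℝ := fun u => (Φ.toFun u p).1 - (p.1 + u) with hf
  have hderiv : ∀ u ∈ Set.uIcc (0:ℝ) t, HasDerivAt f 0 u := by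
    intro u hu
    have h1 := hic u (hseg u hu)
    have h2 := (hasMFDerivAt_fst (I := 𝓘(ℝ, ℝ)) (I' := I) (Φ.toFun u p)).comp u h1
    rw [hasMFDerivAt_iff_hasFDerivAt] at h2
    have h3 : HasDerivAt (fun u => (Φ.toFun u p).1)
        (((ContinuousLinearMap.fst ℝ ℝ E).comp
          ((1 : ℝ →L[ℝ] ℝ).smulRight (((1 : ℝ), v (Φ.toFun u p).2) : ℝ × E))) 1) u := by
      exact HasFDerivAt.hasDerivAt h2
    have hval : (((ContinuousLinearMap.fst ℝ ℝ E).comp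
        ((1 : ℝ →L[ℝ] ℝ).smulRight ((1 : ℝ), v (Φ.toFun u p).2))) 1 : ℝ) = 1 := by simp
    rw [hval] at h3
    exact (h3.sub ((hasDerivAt_id u).const_add p.1)).congr_deriv (sub_self _)
  have key : ∀ u ∈ Set.uIcc (0:ℝ) t, f u = f (min 0 t) := by
    intro u hu
    rw [Set.uIcc] at hu
    have := norm_image_sub_le_of_norm_deriv_le_segment'
      (f := f) (f' := fun _ => (0:ℝ)) (C := 0) (a := min 0 t) (b := max 0 t)
      (fun x hx => ((hderiv x (by rwa [Set.uIcc])).hasDerivWithinAt))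
      (fun x _ => by simp) u hu
    have h0 : ‖f u - f (min 0 t)‖ ≤ 0 := by simpa using this
    have := norm_nonneg (f u - f (min 0 t))
    have : ‖f u - f (min 0 t)‖ = 0 := le_antisymm h0 this
    have := norm_eq_zero.mp this
    linarith [sub_eq_zero.mp this]
  have h0 : f 0 = 0 := by simp [hf, Φ.map_zero]
  have ht' : f t = f (min 0 t) := key t Set.right_mem_uIcc
  have h0' : f 0 = f (min 0 t) := key 0 Set.left_mem_uIcc
  have : f t = 0 := by rw [ht', ← h0', h0]
  have := this
  simp only [hf] at this
  linarith

lemma MaxLocalFlow.rel_equiv : Equivalence Φ.rel := by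
  constructor
  · intro p; exact ⟨0, Φ.zero_mem p, Φ.map_zero p⟩
  · rintro p q ⟨t, ht, rfl⟩
    exact ⟨-t, (Φ.map_neg p t ht).1, (Φ.map_neg p t ht).2⟩
  · rintro p q r ⟨t, ht, rfl⟩ ⟨u, hu, rfl⟩
    exact ⟨t + u, (Φ.map_add p t u ht hu).1, (Φ.map_add p t u ht hu).2⟩

lemma MaxLocalFlow.quot_mk_eq_iff {p q : ℝ × M} :
    Quot.mk Φ.rel p = Quot.mk Φ.rel q ↔ Φ.rel p q := by
  rw [Quot.eq, (Φ.rel_equiv).eqvGen_iff]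

end Aux

/-- For each `s ∈ ℝ`, the image `j_s(M)` is open in the orbit space
`M_ℝ = (ℝ × M)/X̄` with the quotient topology, and `j_s` is a homeomorphism onto its
image, i.e. an open embedding. -/
theorem js_isOpenEmbedding {E : Type*} [NormedAddCommGroup E] [NormedSpace ℝ E]
    {H : Type*} [TopologicalSpace H] {I : ModelWithCorners ℝ E H}
    {M : Type*} [TopologicalSpace M] [ChartedSpace H M] [IsManifold I ((⊤ : ℕ∞) : WithTop ℕ∞) M]
    (v : (x : M) → TangentSpace I x)
    (Φ : MaxLocalFlow ((𝓘(ℝ, ℝ)).prod I) (ℝ × M) (barField v)) (s : ℝ) :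
    IsOpen (Set.range fun x : M => Quot.mk Φ.rel ((s, x) : ℝ × M)) ∧
      IsOpenEmbedding (fun x : M => Quot.mk Φ.rel ((s, x) : ℝ × M)) := by
  
  set q : ℝ × M → Quot Φ.rel := Quot.mk Φ.rel with hq
  -- the saturated continuous "return to time s" data
  set U : Set (ℝ × M) := {p : ℝ × M | (s - p.1, p) ∈ Φ.domain} with hU
  have hUopen : IsOpen U := by
    have : Continuous fun p : ℝ × M => ((s - p.1 : ℝ), p) := by fun_prop
    exact Φ.isOpen_domain.preimage this
  have hflow_cont : ContinuousOn (fun p : ℝ × M => Φ.toFun (s - p.1) p) U := by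
    have hc : Continuous fun p : ℝ × M => ((s - p.1 : ℝ), p) := by fun_prop
    exact Φ.continuousOn.comp hc.continuousOn (fun p hp => hp)
  -- characterize membership in saturations
  have hrel_iff : ∀ (p : ℝ × M) (x : M),
      Φ.rel p (s, x) ↔ p ∈ U ∧ Φ.toFun (s - p.1) p = (s, x) := by
    intro p x
    constructor
    · rintro ⟨t, ht, hft⟩
      have := Φ.fst_toFun p t ht
      rw [hft] at this
      have hts : t = s - p.1 := by linarith
      subst hts
      exact ⟨ht, hft⟩
    · rintro ⟨hp, hfp⟩
      exact ⟨s - p.1, hp, hfp⟩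
  have hfst : ∀ p ∈ U, (Φ.toFun (s - p.1) p).1 = s := by
    intro p hp
    have := Φ.fst_toFun p (s - p.1) hp
    rw [this]; ring
  -- key: preimage of image of a set V
  have hpre : ∀ V : Set M,
      q ⁻¹' (q '' ((fun x : M => ((s, x) : ℝ × M)) '' V))
        = U ∩ (fun p : ℝ × M => Φ.toFun (s - p.1) p) ⁻¹' (Set.univ ×ˢ V) := by
    intro V
    ext p
    simp only [Set.mem_preimage, Set.mem_image, Set.mem_inter_iff, Set.mem_prod,
      Set.mem_univ, true_and]
    constructor
    · rintro ⟨_, ⟨x, hx, rfl⟩, hqe⟩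
      have hrel : Φ.rel p (s, x) := (Φ.quot_mk_eq_iff).mp hqe.symm
      obtain ⟨hp, hfp⟩ := (hrel_iff p x).mp hrel
      exact ⟨hp, by rw [hfp]; exact hx⟩
    · rintro ⟨hp, hx⟩
      refine ⟨(s, (Φ.toFun (s - p.1) p).2), ⟨(Φ.toFun (s - p.1) p).2, hx, rfl⟩, ?_⟩
      have hfp : Φ.toFun (s - p.1) p = (s, (Φ.toFun (s - p.1) p).2) := by
        ext
        · exact hfst p hp
        · rfl
      exact ((Φ.quot_mk_eq_iff).mpr ((hrel_iff p _).mpr ⟨hp, hfp⟩)).symm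
  -- j_s is an open map into the quotient
  have hopenmap : IsOpenMap (fun x : M => q ((s, x) : ℝ × M)) := by
    intro V hV
    have himg : (fun x : M => q ((s, x) : ℝ × M)) '' V
        = q '' ((fun x : M => ((s, x) : ℝ × M)) '' V) := by
      rw [Set.image_image]
    rw [himg, isOpen_coinduced, hpre V]
    exact hflow_cont.isOpen_inter_preimage hUopen (isOpen_univ.prod hV)
  -- injectivity
  have hinj : Function.Injective (fun x : M => q ((s, x) : ℝ × M)) := by
    intro x y hxy
    have hrel : Φ.rel (s, x) (s, y) := (Φ.quot_mk_eq_iff).mp hxy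
    obtain ⟨hp, hfp⟩ := (hrel_iff (s, x) y).mp hrel
    have : s - (s : ℝ) = 0 := by ring
    rw [this, Φ.map_zero] at hfp
    exact congrArg Prod.snd hfp
  -- continuity
  have hcont : Continuous (fun x : M => q ((s, x) : ℝ × M)) := by
    exact (continuous_quot_mk).comp (Continuous.prodMk_right s)
  have hemb : IsOpenEmbedding (fun x : M => q ((s, x) : ℝ × M)) :=
    IsOpenEmbedding.of_continuous_injective_isOpenMap hcont hinj hopenmap
  exact ⟨hemb.isOpen_range, hemb⟩
end

section
/- Let X be a smooth vector field on M with flow completion j : (M,X) → (M_ℝ, X_ℝ). Then j induces a homeomorphism between the orbit (leaf) space M/X and the orbit space M_ℝ/X_ℝ. -/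
open scoped Manifold Topology
open Set Filter Topology

/-- The relation on the flow completion `M_ℝ = (ℝ × M)/X̄` generated by the induced
(translation) flow `X_ℝ`. -/
def translationRel {E : Type*} [NormedAddCommGroup E] [NormedSpace ℝ E]
    {H : Type*} [TopologicalSpace H] {I : ModelWithCorners ℝ E H}
    {M : Type*} [TopologicalSpace M] [ChartedSpace H M]
    {v : (x : M) → TangentSpace I x}
    (Φ : MaxLocalFlow ((𝓘(ℝ, ℝ)).prod I) (ℝ × M) (barField v)) :
    Quot Φ.rel → Quot Φ.rel → Prop :=
  fun a b => ∃ (t : ℝ) (p : ℝ × M),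
    a = Quot.mk Φ.rel p ∧ b = Quot.mk Φ.rel ((p.1 + t, p.2) : ℝ × M)

section Auxiliary

/-- The (old, non-within) notion of integral curve on a set. -/
def IsIntegralCurveOnOld {E : Type*} [NormedAddCommGroup E] [NormedSpace ℝ E]
    {H : Type*} [TopologicalSpace H] {I : ModelWithCorners ℝ E H}
    {M : Type*} [TopologicalSpace M] [ChartedSpace H M]
    (γ : ℝ → M) (v : (x : M) → TangentSpace I x) (s : Set ℝ) : Prop :=
  ∀ t ∈ s, HasMFDerivAt 𝓘(ℝ, ℝ) I γ t ((1 : ℝ →L[ℝ] ℝ).smulRight <| v (γ t))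

/-- An open set containing `uIcc 0 t` contains an interval `Ioo a b` with `a < 0 < b`
and `t ∈ Ioo a b`. -/
lemma interval_thicken {S : Set ℝ} (hS : IsOpen S) {t : ℝ} (h : Set.uIcc 0 t ⊆ S) :
    ∃ a b : ℝ, a < 0 ∧ 0 < b ∧ t ∈ Set.Ioo a b ∧ Set.Ioo a b ⊆ S := by
  obtain ⟨ε, hε, hsub⟩ := isCompact_uIcc.exists_thickening_subset_open hS h
  refine ⟨min 0 t - ε, max 0 t + ε, by simp [hε], by positivity, ?_, ?_⟩
  · constructor
    · have : min 0 t ≤ t := min_le_right 0 t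
      linarith
    · have : t ≤ max 0 t := le_max_right 0 t
      linarith
  · intro r hr
    apply hsub
    rw [Metric.mem_thickening_iff]
    rcases le_total r (min 0 t) with h1 | h1
    · refine ⟨min 0 t, ?_, ?_⟩
      · rcases le_total (0 : ℝ) t with h | h
        · rw [min_eq_left h]; exact Set.left_mem_uIcc
        · rw [min_eq_right h]; exact Set.right_mem_uIcc
      · rw [Real.dist_eq, abs_sub_lt_iff]
        constructor <;> [linarith; linarith [hr.1]]
    · rcases le_total r (max 0 t) with h2 | h2
      · refine ⟨r, ?_, by simpa using hε⟩
        rcases le_total (0 : ℝ) t with h | h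
        · exact Set.mem_uIcc.mpr (Or.inl ⟨by simpa [min_eq_left h] using h1,
            by simpa [max_eq_right h] using h2⟩)
        · exact Set.mem_uIcc.mpr (Or.inr ⟨by simpa [min_eq_right h] using h1,
            by simpa [max_eq_left h] using h2⟩)
      · refine ⟨max 0 t, ?_, ?_⟩
        · rcases le_total (0 : ℝ) t with h | h
          · rw [max_eq_right h]; exact Set.right_mem_uIcc
          · rw [max_eq_left h]; exact Set.left_mem_uIcc
        · rw [Real.dist_eq, abs_sub_lt_iff]
          constructor <;> [linarith [hr.2]; linarith]

variable {E : Type*} [NormedAddCommGroup E] [NormedSpace ℝ E]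
    {H : Type*} [TopologicalSpace H] {I : ModelWithCorners ℝ E H}
    {M : Type*} [TopologicalSpace M] [ChartedSpace H M]
    {v : (x : M) → TangentSpace I x}

lemma hasMFDerivAt_prod'
    {𝕜 : Type*} [NontriviallyNormedField 𝕜]
    {E : Type*} [NormedAddCommGroup E] [NormedSpace 𝕜 E]
    {H : Type*} [TopologicalSpace H] {I : ModelWithCorners 𝕜 E H}
    {M : Type*} [TopologicalSpace M] [ChartedSpace H M]
    {E' : Type*} [NormedAddCommGroup E'] [NormedSpace 𝕜 E']
    {H' : Type*} [TopologicalSpace H'] {I' : ModelWithCorners 𝕜 E' H'}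
    {M' : Type*} [TopologicalSpace M'] [ChartedSpace H' M']
    {E'' : Type*} [NormedAddCommGroup E''] [NormedSpace 𝕜 E'']
    {H'' : Type*} [TopologicalSpace H''] {I'' : ModelWithCorners 𝕜 E'' H''}
    {M'' : Type*} [TopologicalSpace M''] [ChartedSpace H'' M'']
    {f : M → M'} {g : M → M''} {x : M}
    {f' : TangentSpace I x →L[𝕜] TangentSpace I' (f x)}
    {g' : TangentSpace I x →L[𝕜] TangentSpace I'' (g x)}
    (hf : HasMFDerivAt I I' f x f') (hg : HasMFDerivAt I I'' g x g') :
    HasMFDerivAt I (I'.prod I'') (fun y => (f y, g y)) x (f'.prod g') := by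
  have h := (hf.mdifferentiableAt.prodMk hg.mdifferentiableAt).hasMFDerivAt
  rwa [MDifferentiableAt.mfderiv_prod hf.mdifferentiableAt hg.mdifferentiableAt,
    hf.mfderiv, hg.mfderiv] at h

/-- The pairing of the translation with an integral curve of `v` is an integral curve of
`barField v`. -/
lemma barField_integralCurve {γ : ℝ → M} {s : Set ℝ} (c : ℝ)
    (h : IsIntegralCurveOnOld γ v s) :
    IsIntegralCurveOnOld (fun r => ((c + r, γ r) : ℝ × M)) (barField v) s := by
  intro r hr
  have h1 : HasMFDerivAt 𝓘(ℝ, ℝ) 𝓘(ℝ, ℝ) (fun r : ℝ => c + r) r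
      ((1 : ℝ →L[ℝ] ℝ).smulRight ((1 : ℝ) : TangentSpace 𝓘(ℝ, ℝ) (c + r))) :=
    hasMFDerivAt_iff_hasFDerivAt.mpr ((hasDerivAt_id r).const_add c).hasFDerivAt
  have h2 := hasMFDerivAt_prod' h1 (h r hr)
  exact h2

/-- The second component of an integral curve of `barField v` is an integral curve of `v`. -/
lemma barField_proj {γ : ℝ → ℝ × M} {s : Set ℝ}
    (h : IsIntegralCurveOnOld γ (barField v) s) :
    IsIntegralCurveOnOld (fun r => (γ r).2) v s := by
  intro r hr
  have h2 := (hasMFDerivAt_snd (γ r)).comp r (h r hr)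
  exact h2

variable (φ : MaxLocalFlow I M v)
  (Φ : MaxLocalFlow ((𝓘(ℝ, ℝ)).prod I) (ℝ × M) (barField v))

/-- Forward comparison: the flow of `barField v` on a point `(s, x)` exists whenever the flow
of `v` on `x` does, and is given by translation paired with the flow of `v`. -/
lemma flow_compare_fwd {t : ℝ} {x : M} (h : (t, x) ∈ φ.domain) (s : ℝ) :
    (t, ((s, x) : ℝ × M)) ∈ Φ.domain ∧
      Φ.toFun t (s, x) = ((s + t, φ.toFun t x) : ℝ × M) := by
  have hSopen : IsOpen {r : ℝ | (r, x) ∈ φ.domain} :=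
    φ.isOpen_domain.preimage (continuous_id.prodMk continuous_const)
  have hsub : Set.uIcc 0 t ⊆ {r : ℝ | (r, x) ∈ φ.domain} :=
    fun u hu => φ.segment_mem x t h u hu
  obtain ⟨a, b, ha, hb, htm, hab⟩ := interval_thicken hSopen hsub
  have hγ : IsIntegralCurveOnOld (fun r => ((s + r, φ.toFun r x) : ℝ × M)) (barField v)
      (Set.Ioo a b) := barField_integralCurve s (fun r hr => φ.isIntegralCurveOn x r (hab hr))
  have := Φ.maximal (s, x) _ a b ha hb (by simp [φ.map_zero]) hγ t htm
  exact this

/-- Backward comparison: the flow of `v` on `x` exists whenever the flow of `barField v`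
on `(s, x)` does. -/
lemma flow_compare_bwd {t s : ℝ} {x : M} (h : (t, ((s, x) : ℝ × M)) ∈ Φ.domain) :
    (t, x) ∈ φ.domain := by
  have hTopen : IsOpen {r : ℝ | (r, ((s, x) : ℝ × M)) ∈ Φ.domain} :=
    Φ.isOpen_domain.preimage (continuous_id.prodMk continuous_const)
  have hsub : Set.uIcc 0 t ⊆ {r : ℝ | (r, ((s, x) : ℝ × M)) ∈ Φ.domain} :=
    fun u hu => Φ.segment_mem (s, x) t h u hu
  obtain ⟨a, b, ha, hb, htm, hab⟩ := interval_thicken hTopen hsub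
  have hδ : IsIntegralCurveOnOld (fun r => (Φ.toFun r (s, x)).2) v (Set.Ioo a b) :=
    barField_proj (fun r hr => Φ.isIntegralCurveOn (s, x) r (hab hr))
  have := φ.maximal x _ a b ha hb (by simp [Φ.map_zero]) hδ t htm
  exact this.1

/-- The map `M → M_ℝ/X_ℝ`. -/
def toOrbit (x : M) : Quot (translationRel Φ) :=
  Quot.mk _ (Quot.mk Φ.rel (((0 : ℝ), x) : ℝ × M))

lemma toOrbit_const : ∀ x y : M, φ.rel x y → toOrbit Φ x = toOrbit Φ y := by
  rintro x y ⟨t, hd, rfl⟩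
  obtain ⟨h1, h2⟩ := flow_compare_fwd φ Φ hd 0
  have e1 : Quot.mk Φ.rel (((0 : ℝ), x) : ℝ × M)
      = Quot.mk Φ.rel ((0 + t, φ.toFun t x) : ℝ × M) := Quot.sound ⟨t, h1, h2⟩
  have e2 : Quot.mk (translationRel Φ) (Quot.mk Φ.rel ((0 + t, φ.toFun t x) : ℝ × M))
      = Quot.mk (translationRel Φ) (Quot.mk Φ.rel (((0 : ℝ), φ.toFun t x) : ℝ × M)) := by
    refine Quot.sound ⟨-t, (0 + t, φ.toFun t x), rfl, ?_⟩
    norm_num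
  rw [toOrbit, e1, e2, toOrbit]

/-- The map `M_ℝ → M/X`. -/
def fromCompletion : Quot Φ.rel → Quot φ.rel :=
  Quot.lift (fun p : ℝ × M => Quot.mk φ.rel p.2) (by
    rintro ⟨s, x⟩ p' ⟨t, hd, rfl⟩
    have hb := flow_compare_bwd φ Φ hd
    have hf := flow_compare_fwd φ Φ hb s
    have : (Φ.toFun t ((s, x) : ℝ × M)).2 = φ.toFun t x := by rw [hf.2]
    exact Quot.sound ⟨t, hb, this.symm⟩)

/-- The map `M_ℝ/X_ℝ → M/X`. -/
def fromOrbit : Quot (translationRel Φ) → Quot φ.rel :=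
  Quot.lift (fromCompletion φ Φ) (by
    rintro a b ⟨t, p, rfl, rfl⟩
    rfl)

end Auxiliary

/-- The flow completion `j : (M, X) → (M_ℝ, X_ℝ)` induces a homeomorphism between the
orbit (leaf) space `M/X` and the orbit space `M_ℝ/X_ℝ` (both with quotient topology). -/
theorem orbit_spaces_homeomorphic {E : Type*} [NormedAddCommGroup E] [NormedSpace ℝ E]
    {H : Type*} [TopologicalSpace H] {I : ModelWithCorners ℝ E H}
    {M : Type*} [TopologicalSpace M] [ChartedSpace H M] [IsManifold I (⊤ : ℕ∞) M]
    (v : (x : M) → TangentSpace I x)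
    (φ : MaxLocalFlow I M v)
    (Φ : MaxLocalFlow ((𝓘(ℝ, ℝ)).prod I) (ℝ × M) (barField v)) :
    ∃ h : Quot φ.rel ≃ₜ Quot (translationRel Φ),
      ∀ x : M, h (Quot.mk φ.rel x)
        = Quot.mk (translationRel Φ) (Quot.mk Φ.rel (((0 : ℝ), x) : ℝ × M)) := by
  refine ⟨⟨⟨Quot.lift (toOrbit Φ) (toOrbit_const φ Φ), fromOrbit φ Φ, ?_, ?_⟩, ?_, ?_⟩,
    fun x => rfl⟩
  · intro q
    induction q using Quot.ind with
    | _ x => rfl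
  · intro q
    induction q using Quot.ind with
    | _ a =>
      induction a using Quot.ind with
      | _ p =>
        show Quot.mk (translationRel Φ) (Quot.mk Φ.rel (((0 : ℝ), p.2) : ℝ × M))
          = Quot.mk (translationRel Φ) (Quot.mk Φ.rel p)
        have : Quot.mk Φ.rel ((0 + p.1, p.2) : ℝ × M) = Quot.mk Φ.rel p := by
          norm_num
        refine (Quot.sound ⟨p.1, ((0 : ℝ), p.2), rfl, ?_⟩).trans (congrArg _ this)
        rfl
  · exact continuous_quot_lift _ ((continuous_quot_mk.comp continuous_quot_mk).comp
      (continuous_const.prodMk continuous_id))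
  · exact continuous_quot_lift _ (continuous_quot_lift _
      (continuous_quot_mk.comp continuous_snd))
end
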